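/- Let (R_i, t_i) be a perfectoid tower arising from (R_0, I_0). Then for every i ≥ 0 the small tilt R_i^{s♭} is I_0^{s♭}R_i^{s♭}-adically complete and separated, i.e., the canonical map R_i^{s♭} → lim_n R_i^{s♭}/(I_0^{s♭}R_i^{s♭})^n is bijective. -/

import Mathlib

set_option synthInstance.maxHeartbeats 1000000
set_option maxHeartbeats 1000000
universe u

namespace PaperTower

variable {R : ℕ → Type u} [∀ i, CommRing (R i)]

/-- The set of `J`-torsion elements of a commutative ring. -/
def torSet {A : Type*} [CommRing A] (J : Ideal A) : Set A :=
  {x | ∀ a ∈ J, ∃ n : ℕ, 0 < n ∧ a ^ n * x = 0}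

/-- Cast ring homomorphism between quotients at equal indices. -/
def qcast (I : ∀ i, Ideal (R i)) {m n : ℕ} (h : m = n) :
    (R m ⧸ I m) →+* (R n ⧸ I n) := by subst h; exact RingHom.id _

/-- The `j`-th small tilt (inverse quasi-perfection) of a tower, as a subring of the
product of the quotients, consisting of sequences compatible with the Frobenius
projections `F`. -/
def Tilt (I : ∀ i, Ideal (R i))
    (F : ∀ i, (R (i + 1) ⧸ I (i + 1)) →+* (R i ⧸ I i)) (j : ℕ) :
    Subring (∀ i, R (j + i) ⧸ I (j + i)) where
  carrier := {a | ∀ i, F (j + i) (a (i + 1)) = a i}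
  zero_mem' := by
    intro i
    show F (j + i) 0 = 0
    simp
  one_mem' := by
    intro i
    show F (j + i) 1 = 1
    simp
  add_mem' := by
    intro a b ha hb i
    show F (j + i) (a (i + 1) + b (i + 1)) = a i + b i
    rw [map_add, ha i, hb i]
  mul_mem' := by
    intro a b ha hb i
    show F (j + i) (a (i + 1) * b (i + 1)) = a i * b i
    rw [map_mul, ha i, hb i]
  neg_mem' := by
    intro a ha i
    show F (j + i) (-(a (i + 1))) = -(a i)
    rw [map_neg, ha i]

/-- The `m`-th projection `Φ^{(j)}_m` from the `j`-th small tilt. -/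
def proj (I : ∀ i, Ideal (R i))
    (F : ∀ i, (R (i + 1) ⧸ I (i + 1)) →+* (R i ⧸ I i)) (j m : ℕ) :
    Tilt I F j →+* (R (j + m) ⧸ I (j + m)) :=
  (Pi.evalRingHom _ m).comp (Tilt I F j).subtype

section Aux
variable (I : ∀ i, Ideal (R i)) (F : ∀ i, (R (i + 1) ⧸ I (i + 1)) →+* (R i ⧸ I i))

theorem qcast_refl {m : ℕ} (h : m = m) (x : R m ⧸ I m) : qcast I h x = x := rfl

theorem qcast_trans {m n k : ℕ} (h1 : m = n) (h2 : n = k) (x : R m ⧸ I m) :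
    qcast I h2 (qcast I h1 x) = qcast I (h1.trans h2) x := by subst h1; subst h2; rfl

theorem F_qcast {m n : ℕ} (h : m = n) (h' : m + 1 = n + 1) (x : R (m + 1) ⧸ I (m + 1)) :
    F n (qcast I h' x) = qcast I h (F m x) := by subst h; rfl

theorem tilt_F {j : ℕ} (a : Tilt I F j) (i : ℕ) : F (j + i) (a.1 (i + 1)) = a.1 i := a.2 i

theorem coord_mul {j : ℕ} (x y : Tilt I F j) (i : ℕ) : (x * y).1 i = x.1 i * y.1 i := rfl
theorem coord_add {j : ℕ} (x y : Tilt I F j) (i : ℕ) : (x + y).1 i = x.1 i + y.1 i := rfl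
theorem coord_sub {j : ℕ} (x y : Tilt I F j) (i : ℕ) : (x - y).1 i = x.1 i - y.1 i := rfl
theorem coord_zero {j : ℕ} (i : ℕ) : (0 : Tilt I F j).1 i = 0 := rfl
theorem coord_pow {j : ℕ} (x : Tilt I F j) (n i : ℕ) : (x ^ n).1 i = x.1 i ^ n := by
  induction n with
  | zero => rfl
  | succ n ih => rw [pow_succ, pow_succ, coord_mul, ih]

theorem tilt_vanish {j : ℕ} (r : Tilt I F j) (N : ℕ) (hN : r.1 N = 0) :
    ∀ i, i ≤ N → r.1 i = 0 := by
  have key : ∀ k i, r.1 (i + k) = 0 → r.1 i = 0 := by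
    intro k
    induction k with
    | zero => exact fun i h => h
    | succ k ih =>
      intro i h
      refine ih i ?_
      have h' : r.1 ((i + k) + 1) = 0 := h
      rw [← tilt_F I F r (i + k), h', map_zero]
  intro i hi
  have hik : i + (N - i) = N := Nat.add_sub_cancel' hi
  apply key (N - i) i
  rw [hik]
  exact hN

theorem tilt_surj (hFsurj : ∀ i, Function.Surjective (F i)) :
    ∀ (M j : ℕ) (x : R (j + M) ⧸ I (j + M)), ∃ a : Tilt I F j, a.1 M = x := by
  intro M
  induction M with
  | zero =>
    intro j x
    let u : ∀ i, R (j + i) ⧸ I (j + i) := fun i =>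
      Nat.rec x (fun i y => (hFsurj (j + i) y).choose) i
    refine ⟨⟨u, fun i => ?_⟩, rfl⟩
    exact (hFsurj (j + i) (u i)).choose_spec
  | succ M ih =>
    intro j x
    obtain ⟨b, hb⟩ := ih (j + 1) (qcast I (by omega) x)
    let v : ∀ i, R (j + i) ⧸ I (j + i) := fun i =>
      Nat.casesOn i (F j (b.1 0)) (fun i' => qcast I (by omega : (j+1)+i' = j+(i'+1)) (b.1 i'))
    have hv : ∀ i, F (j + i) (v (i + 1)) = v i := by
      intro i
      cases i with
      | zero => rfl
      | succ i' =>
        exact (F_qcast I F (by omega : (j+1)+i' = j+(i'+1)) (by omega) (b.1 (i'+1))).trans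
          (congrArg (qcast I (by omega : (j+1)+i' = j+(i'+1))) (tilt_F I F b i'))
    refine ⟨⟨v, hv⟩, ?_⟩
    show qcast I (by omega : (j+1)+M = j+(M+1)) (b.1 M) = x
    rw [hb, qcast_trans]
    exact qcast_refl I _ x
end Aux

/-- sequence of generators of the ideals `I1e i`. -/
def gSeq (t : ∀ i, R i →+* R (i + 1)) (g0 : R 1) : ∀ i, R (i + 1) :=
  fun i => Nat.rec g0 (fun i g => t (i + 1) g) i

section Main
variable (p : ℕ) (t : ∀ i, R i →+* R (i + 1)) (I : ∀ i, Ideal (R i))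
  (F : ∀ i, (R (i + 1) ⧸ I (i + 1)) →+* (R i ⧸ I i))
  (tbar : ∀ i, (R i ⧸ I i) →+* (R (i + 1) ⧸ I (i + 1)))
  (g0 : R 1) (I1e : ∀ i, Ideal (R (i + 1)))

theorem span_I1e (hg0 : I1e 0 = Ideal.span {g0})
    (hI1es : ∀ i, I1e (i + 1) = (I1e i).map (t (i + 1))) (i : ℕ) :
    I1e i = Ideal.span {gSeq t g0 i} := by
  induction i with
  | zero => exact hg0
  | succ i ih => rw [hI1es i, ih, Ideal.map_span, Set.image_singleton]; rfl

theorem I_eq_pow (hIsucc : ∀ i, I (i + 1) = (I i).map (t i))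
    (hI1pow : I1e 0 ^ p = I 1)
    (hI1es : ∀ i, I1e (i + 1) = (I1e i).map (t (i + 1))) (i : ℕ) :
    I (i + 1) = I1e i ^ p := by
  induction i with
  | zero => exact hI1pow.symm
  | succ i ih => rw [hIsucc (i + 1), ih, Ideal.map_pow, ← hI1es i]

theorem mk_g_pow (hg0 : I1e 0 = Ideal.span {g0})
    (hIsucc : ∀ i, I (i + 1) = (I i).map (t i))
    (hI1pow : I1e 0 ^ p = I 1)
    (hI1es : ∀ i, I1e (i + 1) = (I1e i).map (t (i + 1))) (i : ℕ) :
    Ideal.Quotient.mk (I (i + 1)) (gSeq t g0 i) ^ p = 0 := by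
  rw [← map_pow, Ideal.Quotient.eq_zero_iff_mem,
    I_eq_pow p t I I1e hIsucc hI1pow hI1es i, span_I1e t g0 I1e hg0 hI1es i,
    Ideal.span_singleton_pow]
  exact Ideal.mem_span_singleton_self _

theorem ker_F_span
    (hkerF : ∀ i, RingHom.ker (F i) = (I1e i).map (Ideal.Quotient.mk (I (i + 1))))
    (hg0 : I1e 0 = Ideal.span {g0})
    (hI1es : ∀ i, I1e (i + 1) = (I1e i).map (t (i + 1))) (i : ℕ) :
    RingHom.ker (F i) = Ideal.span {Ideal.Quotient.mk (I (i + 1)) (gSeq t g0 i)} := by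
  rw [hkerF i, span_I1e t g0 I1e hg0 hI1es i, Ideal.map_span, Set.image_singleton]

theorem tbar_g
    (htbar : ∀ i (x : R i),
      tbar i (Ideal.Quotient.mk (I i) x) = Ideal.Quotient.mk (I (i + 1)) (t i x)) (i : ℕ) :
    tbar (i + 1) (Ideal.Quotient.mk (I (i + 1)) (gSeq t g0 i))
      = Ideal.Quotient.mk (I (i + 2)) (gSeq t g0 (i + 1)) := by
  rw [htbar]; rfl

variable {j : ℕ}

theorem tilt_tbar (hF : ∀ i (x : R (i + 1) ⧸ I (i + 1)), tbar i (F i x) = x ^ p)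
    (a : Tilt I F j) (i : ℕ) :
    tbar (j + i) (a.1 i) = a.1 (i + 1) ^ p := by
  rw [← tilt_F I F a i, hF]

theorem phi_pow (htbar : ∀ i (x : R i),
      tbar i (Ideal.Quotient.mk (I i) x) = Ideal.Quotient.mk (I (i + 1)) (t i x))
    (hF : ∀ i (x : R (i + 1) ⧸ I (i + 1)), tbar i (F i x) = x ^ p)
    (φ : Tilt I F j)
    (hφ1 : φ.1 1 = Ideal.Quotient.mk (I (j + 1)) (gSeq t g0 j)) (m : ℕ) :
    φ.1 (m + 1) ^ p ^ m = Ideal.Quotient.mk (I (j + (m + 1))) (gSeq t g0 (j + m)) := by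
  induction m with
  | zero => simpa using hφ1
  | succ m ih =>
    have h1 : tbar (j + (m + 1)) (φ.1 (m + 1)) = φ.1 (m + 2) ^ p :=
      tilt_tbar p I F tbar hF φ (m + 1)
    calc φ.1 (m + 2) ^ p ^ (m + 1) = (φ.1 (m + 2) ^ p) ^ p ^ m := by
          rw [← pow_mul, ← pow_succ']
      _ = tbar (j + (m + 1)) (φ.1 (m + 1) ^ p ^ m) := by rw [map_pow, h1]
      _ = _ := (congrArg _ ih).trans (tbar_g t I tbar g0 htbar (j + m))

theorem phi_nil (htbar : ∀ i (x : R i),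
      tbar i (Ideal.Quotient.mk (I i) x) = Ideal.Quotient.mk (I (i + 1)) (t i x))
    (hF : ∀ i (x : R (i + 1) ⧸ I (i + 1)), tbar i (F i x) = x ^ p)
    (hg0 : I1e 0 = Ideal.span {g0})
    (hIsucc : ∀ i, I (i + 1) = (I i).map (t i))
    (hI1pow : I1e 0 ^ p = I 1)
    (hI1es : ∀ i, I1e (i + 1) = (I1e i).map (t (i + 1)))
    (φ : Tilt I F j) (hφ0 : φ.1 0 = 0)
    (hφ1 : φ.1 1 = Ideal.Quotient.mk (I (j + 1)) (gSeq t g0 j)) (m : ℕ) :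
    φ.1 m ^ p ^ m = 0 := by
  cases m with
  | zero => simpa using hφ0
  | succ m =>
    rw [pow_succ, pow_mul, phi_pow p t I F tbar g0 htbar hF φ hφ1 m]
    exact mk_g_pow p t I g0 I1e hg0 hIsucc hI1pow hI1es (j + m)

theorem phi_coord_zero (htbar : ∀ i (x : R i),
      tbar i (Ideal.Quotient.mk (I i) x) = Ideal.Quotient.mk (I (i + 1)) (t i x))
    (hF : ∀ i (x : R (i + 1) ⧸ I (i + 1)), tbar i (F i x) = x ^ p)
    (hg0 : I1e 0 = Ideal.span {g0})
    (hIsucc : ∀ i, I (i + 1) = (I i).map (t i))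
    (hI1pow : I1e 0 ^ p = I 1)
    (hI1es : ∀ i, I1e (i + 1) = (I1e i).map (t (i + 1)))
    (φ : Tilt I F j) (hφ0 : φ.1 0 = 0)
    (hφ1 : φ.1 1 = Ideal.Quotient.mk (I (j + 1)) (gSeq t g0 j))
    (m e : ℕ) (he : p ^ m ≤ e) : φ.1 m ^ e = 0 :=
  pow_eq_zero_of_le he
    (phi_nil p t I F tbar g0 I1e htbar hF hg0 hIsucc hI1pow hI1es φ hφ0 hφ1 m)

theorem div_level (hp : p.Prime)
    (hFsurj : ∀ i, Function.Surjective (F i))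
    (hkerF : ∀ i, RingHom.ker (F i) = (I1e i).map (Ideal.Quotient.mk (I (i + 1))))
    (hg0 : I1e 0 = Ideal.span {g0})
    (hI1es : ∀ i, I1e (i + 1) = (I1e i).map (t (i + 1)))
    (htbar : ∀ i (x : R i),
      tbar i (Ideal.Quotient.mk (I i) x) = Ideal.Quotient.mk (I (i + 1)) (t i x))
    (hF : ∀ i (x : R (i + 1) ⧸ I (i + 1)), tbar i (F i x) = x ^ p)
    (φ : Tilt I F j) (hφ1 : φ.1 1 = Ideal.Quotient.mk (I (j + 1)) (gSeq t g0 j))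
    (m : ℕ) (a : Tilt I F j) (ha : a.1 m = 0) :
    ∀ M, m ≤ M → ∃ c, a.1 M = φ.1 M ^ p ^ m * c := by
  intro M hM
  induction M, hM using Nat.le_induction with
  | base => exact ⟨0, by rw [ha, mul_zero]⟩
  | succ M hM ih =>
    obtain ⟨c, hc⟩ := ih
    obtain ⟨z0, hz0⟩ := hFsurj (j + M) c
    let z : R (j + (M + 1)) ⧸ I (j + (M + 1)) := z0
    have hz : F (j + M) z = c := hz0
    have hker0 : F (j + M) (a.1 (M + 1) - φ.1 (M + 1) ^ p ^ m * z) = 0 := by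
      rw [map_sub, map_mul, map_pow, tilt_F I F a M, tilt_F I F φ M, hz, hc, sub_self]
    have hker : a.1 (M + 1) - φ.1 (M + 1) ^ p ^ m * z
        ∈ Ideal.span {Ideal.Quotient.mk (I (j + (M + 1))) (gSeq t g0 (j + M))} := by
      have h2 : a.1 (M + 1) - φ.1 (M + 1) ^ p ^ m * z ∈ RingHom.ker (F (j + M)) :=
        RingHom.mem_ker.mpr hker0
      rw [ker_F_span t I F g0 I1e hkerF hg0 hI1es (j + M)] at h2
      exact h2
    have hdvd : φ.1 (M + 1) ^ p ^ M ∣ (a.1 (M + 1) - φ.1 (M + 1) ^ p ^ m * z) := by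
      rw [phi_pow p t I F tbar g0 htbar hF φ hφ1 M]
      exact Ideal.mem_span_singleton.mp hker
    obtain ⟨u, hu⟩ := hdvd
    refine ⟨z + φ.1 (M + 1) ^ (p ^ M - p ^ m) * u, ?_⟩
    have hle : p ^ m ≤ p ^ M := Nat.pow_le_pow_right hp.pos hM
    have hsplit : φ.1 (M + 1) ^ p ^ M = φ.1 (M + 1) ^ p ^ m * φ.1 (M + 1) ^ (p ^ M - p ^ m) := by
      rw [← pow_add, Nat.add_sub_cancel' hle]
    rw [hsplit] at hu
    linear_combination hu

theorem pow_gap (hp : p.Prime) {i m l : ℕ} (h : i + 1 ≤ l) :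
    p ^ i ≤ p ^ (m + l) - p ^ m := by
  have hpi : 0 < p ^ i := pow_pos hp.pos i
  have hpm : 0 < p ^ m := pow_pos hp.pos m
  have key : p ^ i + p ^ m ≤ p ^ (m + l) := by
    calc p ^ i + p ^ m ≤ p ^ i * p ^ m + p ^ m * p ^ i :=
          Nat.add_le_add (Nat.le_mul_of_pos_right _ hpm) (Nat.le_mul_of_pos_right _ hpi)
      _ = 2 * (p ^ i * p ^ m) := by ring
      _ ≤ p * (p ^ i * p ^ m) := Nat.mul_le_mul_right _ hp.two_le
      _ = p ^ (i + 1) * p ^ m := by ring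
      _ ≤ p ^ l * p ^ m := Nat.mul_le_mul_right _ (Nat.pow_le_pow_right hp.pos h)
      _ = p ^ (m + l) := by rw [mul_comm, ← pow_add]
  exact Nat.le_sub_of_add_le key

theorem ker_div (hp : p.Prime)
    (hFsurj : ∀ i, Function.Surjective (F i))
    (hkerF : ∀ i, RingHom.ker (F i) = (I1e i).map (Ideal.Quotient.mk (I (i + 1))))
    (hg0 : I1e 0 = Ideal.span {g0})
    (hIsucc : ∀ i, I (i + 1) = (I i).map (t i))
    (hI1pow : I1e 0 ^ p = I 1)
    (hI1es : ∀ i, I1e (i + 1) = (I1e i).map (t (i + 1)))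
    (htbar : ∀ i (x : R i),
      tbar i (Ideal.Quotient.mk (I i) x) = Ideal.Quotient.mk (I (i + 1)) (t i x))
    (hF : ∀ i (x : R (i + 1) ⧸ I (i + 1)), tbar i (F i x) = x ^ p)
    (φ : Tilt I F j) (hφ0 : φ.1 0 = 0)
    (hφ1 : φ.1 1 = Ideal.Quotient.mk (I (j + 1)) (gSeq t g0 j))
    (m : ℕ) (a : Tilt I F j) (ha : a.1 m = 0) :
    ∃ B : Tilt I F j, a = φ ^ p ^ m * B := by
  have hstep : ∀ (l : ℕ) (s : Tilt I F j), (∀ i ≤ m + l, (a - φ ^ p ^ m * s).1 i = 0) →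
      ∃ d : Tilt I F j, ∀ i ≤ m + l + 1,
        (a - φ ^ p ^ m * (s + φ ^ (p ^ (m + l) - p ^ m) * d)).1 i = 0 := by
    intro l s hs
    have h0 : (a - φ ^ p ^ m * s).1 (m + l) = 0 := hs _ le_rfl
    obtain ⟨c, hc⟩ := div_level p t I F tbar g0 I1e hp hFsurj hkerF hg0 hI1es htbar hF φ hφ1
      (m + l) (a - φ ^ p ^ m * s) h0 (m + l + 1) (Nat.le_succ _)
    obtain ⟨d, hd⟩ := tilt_surj I F hFsurj (m + l + 1) j c
    refine ⟨d, ?_⟩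
    have hle : p ^ m ≤ p ^ (m + l) := Nat.pow_le_pow_right hp.pos (Nat.le_add_right m l)
    have key : (a - φ ^ p ^ m * (s + φ ^ (p ^ (m + l) - p ^ m) * d)).1 (m + l + 1) = 0 := by
      have hco : (a - φ ^ p ^ m * (s + φ ^ (p ^ (m + l) - p ^ m) * d)).1 (m + l + 1)
          = (a - φ ^ p ^ m * s).1 (m + l + 1)
            - (φ.1 (m + l + 1) ^ p ^ m * φ.1 (m + l + 1) ^ (p ^ (m + l) - p ^ m))
              * d.1 (m + l + 1) := by
        simp only [coord_sub, coord_mul, coord_add, coord_pow]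
        ring
      rw [hco, ← pow_add, Nat.add_sub_cancel' hle, hc, hd, sub_self]
    exact fun i hi => tilt_vanish I F _ _ key i hi
  choose dfun dspec using hstep
  have base : ∀ i ≤ m + 0, (a - φ ^ p ^ m * 0).1 i = 0 := by
    intro i hi
    have : (a - φ ^ p ^ m * 0).1 i = a.1 i := by
      rw [coord_sub, mul_zero, coord_zero, sub_zero]
    rw [this]
    exact tilt_vanish I F a m ha i hi
  let chainF : ∀ l : ℕ, {s : Tilt I F j // ∀ i ≤ m + l, (a - φ ^ p ^ m * s).1 i = 0} :=
    fun l => Nat.rec ⟨0, base⟩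
      (fun l pr => ⟨pr.1 + φ ^ (p ^ (m + l) - p ^ m) * dfun l pr.1 pr.2,
        dspec l pr.1 pr.2⟩) l
  have chain_succ : ∀ l, (chainF (l + 1)).1
      = (chainF l).1 + φ ^ (p ^ (m + l) - p ^ m) * dfun l (chainF l).1 (chainF l).2 :=
    fun l => rfl
  have stab : ∀ (i L : ℕ), i + 1 ≤ L → (chainF L).1.1 i = (chainF (i + 1)).1.1 i := by
    intro i L
    induction L with
    | zero => omega
    | succ L ih =>
      intro hL
      rcases Nat.lt_or_ge (i + 1) (L + 1) with hlt | hge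
      · have hiL : i + 1 ≤ L := by omega
        rw [chain_succ L, coord_add, coord_mul, coord_pow,
          phi_coord_zero p t I F tbar g0 I1e htbar hF hg0 hIsucc hI1pow hI1es φ hφ0 hφ1 i _
            (pow_gap p hp hiL),
          zero_mul, add_zero]
        exact ih hiL
      · have : L = i := by omega
        subst this
        rfl
  have hBmem : (fun i => (chainF (i + 1)).1.1 i) ∈ Tilt I F j := by
    intro i
    show F (j + i) ((chainF (i + 2)).1.1 (i + 1)) = (chainF (i + 1)).1.1 i
    rw [tilt_F I F (chainF (i + 2)).1 i]
    exact stab i (i + 2) (by omega)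
  refine ⟨⟨_, hBmem⟩, ?_⟩
  apply Subtype.ext
  funext i
  have h := (chainF (i + 1)).2 i (by omega)
  have h' : a.1 i - φ.1 i ^ p ^ m * (chainF (i + 1)).1.1 i = 0 := by
    rw [← coord_pow, ← coord_mul, ← coord_sub]
    exact h
  show a.1 i = (φ ^ p ^ m * (⟨_, hBmem⟩ : Tilt I F j)).1 i
  rw [coord_mul, coord_pow]
  have hB : ((⟨fun i => (chainF (i + 1)).1.1 i, hBmem⟩ : Tilt I F j)).1 i
      = (chainF (i + 1)).1.1 i := rfl
  rw [hB, ← sub_eq_zero]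
  exact h'


theorem ker_span (hp : p.Prime)
    (hFsurj : ∀ i, Function.Surjective (F i))
    (hkerF : ∀ i, RingHom.ker (F i) = (I1e i).map (Ideal.Quotient.mk (I (i + 1))))
    (hg0 : I1e 0 = Ideal.span {g0})
    (hIsucc : ∀ i, I (i + 1) = (I i).map (t i))
    (hI1pow : I1e 0 ^ p = I 1)
    (hI1es : ∀ i, I1e (i + 1) = (I1e i).map (t (i + 1)))
    (htbar : ∀ i (x : R i),
      tbar i (Ideal.Quotient.mk (I i) x) = Ideal.Quotient.mk (I (i + 1)) (t i x))
    (hF : ∀ i (x : R (i + 1) ⧸ I (i + 1)), tbar i (F i x) = x ^ p)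
    (φ : Tilt I F j) (hφ0 : φ.1 0 = 0)
    (hφ1 : φ.1 1 = Ideal.Quotient.mk (I (j + 1)) (gSeq t g0 j))
    (m : ℕ) (a : Tilt I F j) (ha : a.1 m = 0) :
    a ∈ Ideal.span {φ} ^ p ^ m := by
  obtain ⟨B, hB⟩ := ker_div p t I F tbar g0 I1e hp hFsurj hkerF hg0 hIsucc hI1pow hI1es
    htbar hF φ hφ0 hφ1 m a ha
  rw [Ideal.span_singleton_pow, Ideal.mem_span_singleton]
  exact ⟨B, hB⟩

theorem exists_phi
    (hFsurj : ∀ i, Function.Surjective (F i))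
    (hkerF : ∀ i, RingHom.ker (F i) = (I1e i).map (Ideal.Quotient.mk (I (i + 1))))
    (hg0 : I1e 0 = Ideal.span {g0})
    (hI1es : ∀ i, I1e (i + 1) = (I1e i).map (t (i + 1))) (jj : ℕ) :
    ∃ φ : Tilt I F jj, φ.1 0 = 0
      ∧ φ.1 1 = Ideal.Quotient.mk (I (jj + 1)) (gSeq t g0 jj) := by
  obtain ⟨a, ha⟩ := tilt_surj I F hFsurj 1 jj (Ideal.Quotient.mk (I (jj + 1)) (gSeq t g0 jj))
  refine ⟨a, ?_, ha⟩
  have h0 : F (jj + 0) (a.1 1) = a.1 0 := tilt_F I F a 0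
  rw [← h0, ha]
  have hker : Ideal.Quotient.mk (I (jj + 1)) (gSeq t g0 jj) ∈ RingHom.ker (F jj) := by
    rw [ker_F_span t I F g0 I1e hkerF hg0 hI1es jj]
    exact Ideal.mem_span_singleton_self _
  exact RingHom.mem_ker.mp hker

theorem tsc_coords
    (htbar : ∀ i (x : R i),
      tbar i (Ideal.Quotient.mk (I i) x) = Ideal.Quotient.mk (I (i + 1)) (t i x))
    (ts : ∀ j, Tilt I F j →+* Tilt I F (j + 1))
    (hts : ∀ (j : ℕ) (a : Tilt I F j) (i : ℕ),
      (ts j a).1 i = qcast I (Nat.add_right_comm j i 1 : (j + i) + 1 = (j + 1) + i) (tbar (j + i) (a.1 i)))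
    (tsc : ∀ j, Tilt I F 0 →+* Tilt I F j)
    (htsc0 : tsc 0 = RingHom.id _)
    (htscS : ∀ j, tsc (j + 1) = (ts j).comp (tsc j))
    (f0 : Tilt I F 0) (hf00 : f0.1 0 = 0)
    (hf01 : f0.1 1 = Ideal.Quotient.mk (I (0 + 1)) (gSeq t g0 0)) :
    ∀ jj, (tsc jj f0).1 0 = 0
      ∧ (tsc jj f0).1 1 = Ideal.Quotient.mk (I (jj + 1)) (gSeq t g0 jj) := by
  intro jj
  induction jj with
  | zero =>
    rw [htsc0]
    exact ⟨hf00, hf01⟩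
  | succ jj ih =>
    rw [htscS jj]
    constructor
    · show (ts jj (tsc jj f0)).1 0 = 0
      rw [hts jj (tsc jj f0) 0, ih.1, map_zero, map_zero]
    · show (ts jj (tsc jj f0)).1 1 = _
      rw [hts jj (tsc jj f0) 1, ih.2, tbar_g t I tbar g0 htbar jj]
      exact qcast_refl I _ _

end Main

/-- For a perfectoid tower, every small tilt `R_i^{s♭}` is
`I₀^{s♭}R_i^{s♭}`-adically complete and separated. -/
theorem stmt17 (p : ℕ) (hp : p.Prime)
    (R : ℕ → Type u) [∀ i, CommRing (R i)]
    (t : ∀ i, R i →+* R (i + 1))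
    (I : ∀ i, Ideal (R i))
    (hpI : (p : R 0) ∈ I 0)
    (hIsucc : ∀ i, I (i + 1) = (I i).map (t i))
    (tbar : ∀ i, (R i ⧸ I i) →+* (R (i + 1) ⧸ I (i + 1)))
    (htbar : ∀ i (x : R i),
      tbar i (Ideal.Quotient.mk (I i) x) = Ideal.Quotient.mk (I (i + 1)) (t i x))
    (htbarInj : ∀ i, Function.Injective (tbar i))
    (F : ∀ i, (R (i + 1) ⧸ I (i + 1)) →+* (R i ⧸ I i))
    (hF : ∀ i (x : R (i + 1) ⧸ I (i + 1)), tbar i (F i x) = x ^ p)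
    (hFsurj : ∀ i, Function.Surjective (F i))
    (hJac : ∀ i, I i ≤ (⊥ : Ideal (R i)).jacobson)
    (hI0prin : (I 0).IsPrincipal)
    (I1e : ∀ i, Ideal (R (i + 1)))
    (hI1prin : (I1e 0).IsPrincipal)
    (hI1pow : I1e 0 ^ p = I 1)
    (hI1es : ∀ i, I1e (i + 1) = (I1e i).map (t (i + 1)))
    (hkerF : ∀ i, RingHom.ker (F i) = (I1e i).map (Ideal.Quotient.mk (I (i + 1))))
    (htorz : ∀ i, ∀ a ∈ I i, ∀ x ∈ torSet (I i), a * x = 0)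
    (hFtor : ∀ i, ∃ G : torSet (I (i + 1)) → torSet (I i), Function.Bijective G ∧
      ∀ x : torSet (I (i + 1)),
        Ideal.Quotient.mk (I i) (G x : R i) = F i (Ideal.Quotient.mk (I (i + 1)) (x : R (i + 1))))
    (ts : ∀ j, Tilt I F j →+* Tilt I F (j + 1))
    (hts : ∀ (j : ℕ) (a : Tilt I F j) (i : ℕ),
      (ts j a).1 i = qcast I (by omega : (j + i) + 1 = (j + 1) + i) (tbar (j + i) (a.1 i)))
    (tsc : ∀ j, Tilt I F 0 →+* Tilt I F j)
    (htsc0 : tsc 0 = RingHom.id _)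
    (htscS : ∀ j, tsc (j + 1) = (ts j).comp (tsc j))
    (j : ℕ) :
    IsAdicComplete ((RingHom.ker (proj I F 0 0)).map (tsc j)) (Tilt I F j) := by
  obtain ⟨g0, hg0⟩ := hI1prin.principal
  obtain ⟨f0, hf00, hf01⟩ := exists_phi t I F g0 I1e hFsurj hkerF hg0 hI1es 0
  have hco := tsc_coords t I F tbar g0 htbar ts hts tsc htsc0 htscS f0 hf00 hf01 j
  set φ := tsc j f0 with hφdef
  have hφ0 : φ.1 0 = 0 := hco.1
  have hφ1 : φ.1 1 = Ideal.Quotient.mk (I (j + 1)) (gSeq t g0 j) := hco.2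
  have hker0 : RingHom.ker (proj I F 0 0) = Ideal.span {f0} := by
    ext a
    constructor
    · intro h
      have ha0 : a.1 0 = 0 := RingHom.mem_ker.mp h
      have h2 := ker_span p t I F tbar g0 I1e hp hFsurj hkerF hg0 hIsucc hI1pow hI1es
        htbar hF f0 hf00 hf01 0 a ha0
      rwa [pow_zero, pow_one] at h2
    · intro h
      obtain ⟨c, hc⟩ := Ideal.mem_span_singleton.mp h
      refine RingHom.mem_ker.mpr ?_
      show a.1 0 = 0
      rw [hc, coord_mul, hf00, zero_mul]
  have hmap : (RingHom.ker (proj I F 0 0)).map (tsc j) = Ideal.span {φ} := by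
    rw [hker0, Ideal.map_span, Set.image_singleton]
  rw [hmap]
  refine { toIsHausdorff := ⟨?_⟩, toIsPrecomplete := ⟨?_⟩ }
  · -- Hausdorff
    intro x hx
    apply Subtype.ext
    funext i
    have hx' := hx (p ^ i)
    rw [Ideal.smul_eq_mul, Ideal.mul_top, SModEq.zero, Ideal.span_singleton_pow,
      Ideal.mem_span_singleton] at hx'
    obtain ⟨c, hc⟩ := hx'
    show x.1 i = (0 : Tilt I F j).1 i
    rw [hc, coord_mul, coord_pow,
      phi_nil p t I F tbar g0 I1e htbar hF hg0 hIsucc hI1pow hI1es φ hφ0 hφ1 i,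
      zero_mul, coord_zero]
  · -- Precomplete
    intro f hf
    have hmem : ∀ {m n : ℕ}, m ≤ n → f m - f n ∈ Ideal.span {φ} ^ m := by
      intro m n h
      have h2 := hf h
      rwa [Ideal.smul_eq_mul, Ideal.mul_top, SModEq.sub_mem] at h2
    have hcoordeq : ∀ (i m n : ℕ), m ≤ n → p ^ i ≤ m → (f m).1 i = (f n).1 i := by
      intro i m n hmn hpi
      have h2 : f m - f n ∈ Ideal.span {φ} ^ p ^ i :=
        Ideal.pow_le_pow_right hpi (hmem hmn)
      rw [Ideal.span_singleton_pow, Ideal.mem_span_singleton] at h2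
      obtain ⟨c, hc⟩ := h2
      have h3 : (f m - f n).1 i = 0 := by
        rw [hc, coord_mul, coord_pow,
          phi_nil p t I F tbar g0 I1e htbar hF hg0 hIsucc hI1pow hI1es φ hφ0 hφ1 i, zero_mul]
      have h4 : (f m).1 i - (f n).1 i = 0 := by rw [← coord_sub]; exact h3
      exact sub_eq_zero.mp h4
    have hLmem : (fun i => (f (p ^ i)).1 i) ∈ Tilt I F j := by
      intro i
      show F (j + i) ((f (p ^ (i + 1))).1 (i + 1)) = (f (p ^ i)).1 i
      rw [tilt_F I F (f (p ^ (i + 1))) i]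
      exact (hcoordeq i (p ^ i) (p ^ (i + 1))
        (Nat.pow_le_pow_right hp.pos (Nat.le_succ i)) le_rfl).symm
    refine ⟨⟨_, hLmem⟩, fun n => ?_⟩
    rw [Ideal.smul_eq_mul, Ideal.mul_top, SModEq.sub_mem]
    have hn : n ≤ p ^ n := (Nat.lt_pow_self hp.one_lt : n < p ^ n).le
    have hd0 : ((⟨_, hLmem⟩ : Tilt I F j) - f (p ^ n)).1 n = 0 := sub_self _
    have hd : (⟨_, hLmem⟩ : Tilt I F j) - f (p ^ n) ∈ Ideal.span {φ} ^ p ^ n :=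
      ker_span p t I F tbar g0 I1e hp hFsurj hkerF hg0 hIsucc hI1pow hI1es htbar hF
        φ hφ0 hφ1 n _ hd0
    have heq : f n - (⟨_, hLmem⟩ : Tilt I F j)
        = (f n - f (p ^ n)) - ((⟨_, hLmem⟩ : Tilt I F j) - f (p ^ n)) := by ring
    rw [heq]
    exact sub_mem (hmem hn) (Ideal.pow_le_pow_right hn hd)


end PaperTower
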